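/- arXiv:1009.2277 — 2 statements merged into one kernel-verified Lean document; each statement's English description precedes it below -/
import Mathlib

section
/- Let X be a compact metric space. If f : X → X is a weakly mixing and minimal continuous map, then f is Δ-transitive; equivalently, for every positive integer m and all nonempty open sets U, V₁, …, V_m ⊆ X there exists n ≥ 1 such that U ∩ f⁻ⁿ(V₁) ∩ f⁻²ⁿ(V₂) ∩ … ∩ f⁻ᵐⁿ(V_m) ≠ ∅. -/
open Set Function

/-- A continuous self-map is topologically transitive if every pair of nonempty
open sets is connected by some positive iterate. -/
def TopTransitive {X : Type*} [TopologicalSpace X] (f : X → X) : Prop :=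
  ∀ U V : Set X, IsOpen U → IsOpen V → U.Nonempty → V.Nonempty →
    ∃ n : ℕ, 0 < n ∧ (f^[n] '' U ∩ V).Nonempty

/-- The map `f^{(∗m)} = f × f² × ⋯ × f^m` acting on `X^m` (coordinates indexed by `Fin m`,
where coordinate `i` is moved by `f^[i+1]`). -/
def starMap {X : Type*} (f : X → X) (m : ℕ) : (Fin m → X) → (Fin m → X) :=
  fun x i => f^[(i : ℕ) + 1] (x i)

/-- `f` is weakly mixing if `f × f` is topologically transitive. -/
def WeaklyMixing {X : Type*} [TopologicalSpace X] (f : X → X) : Prop :=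
  TopTransitive (fun p : X × X => (f p.1, f p.2))

/-- `f` is multi-transitive if `f × f² × ⋯ × f^m` is topologically transitive
for every `m ≥ 1`. -/
def MultiTransitive {X : Type*} [TopologicalSpace X] (f : X → X) : Prop :=
  ∀ m : ℕ, 1 ≤ m → TopTransitive (starMap f m)

/-- `f` is Δ-transitive if for each `m ≥ 1` there is a residual set `Y ⊆ X` such that
for every `x ∈ Y` the diagonal tuple `(x, …, x)` has dense orbit under `f × f² × ⋯ × f^m`. -/
def DeltaTransitive {X : Type*} [TopologicalSpace X] (f : X → X) : Prop :=
  ∀ m : ℕ, 1 ≤ m → ∃ Y : Set X, Y ∈ residual X ∧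
    ∀ x ∈ Y, Dense (Set.range fun n : ℕ => (starMap f m)^[n] (fun _ : Fin m => x))

/-- A set `S ⊆ ℕ` is syndetic if there is `L > 0` with `[n, n+L] ∩ S ≠ ∅` for every `n`. -/
def Syndetic (S : Set ℕ) : Prop :=
  ∃ L : ℕ, 0 < L ∧ ∀ n : ℕ, ∃ k ∈ S, n ≤ k ∧ k ≤ n + L

/-- `N(U,V;f) = {n > 0 : f^n(U) ∩ V ≠ ∅}`. -/
def NSet {X : Type*} (f : X → X) (U V : Set X) : Set ℕ :=
  {n | 0 < n ∧ (f^[n] '' U ∩ V).Nonempty}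

/-- `f` is syndetically transitive if `N(U,V;f)` is syndetic for all nonempty open `U, V`. -/
def SyndeticallyTransitive {X : Type*} [TopologicalSpace X] (f : X → X) : Prop :=
  ∀ U V : Set X, IsOpen U → IsOpen V → U.Nonempty → V.Nonempty → Syndetic (NSet f U V)

/-- `f` is strongly transitive if for every nonempty open `U` there is `M > 0` with
`⋃_{j=1}^M f^j(U) = X`. -/
def StronglyTransitive {X : Type*} [TopologicalSpace X] (f : X → X) : Prop :=
  ∀ U : Set X, IsOpen U → U.Nonempty →
    ∃ M : ℕ, 0 < M ∧ (⋃ j ∈ Finset.Icc 1 M, f^[j] '' U) = Set.univ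

/-- `f` is minimal if the only nonempty closed `f`-invariant subset is the whole space. -/
def MinimalMap {X : Type*} [TopologicalSpace X] (f : X → X) : Prop :=
  ∀ K : Set X, IsClosed K → K.Nonempty → f '' K ⊆ K → K = Set.univ

open Filter

/-!
Minimality makes every return-time set `N(U, V)` syndetic. Furstenberg's intersection lemma for the
weakly mixing map shrinks the pairs `(U, f⁻ʲ V)`, `j ≤ L`, to a single pair whose syndetic return
times all start blocks `[s, s + L]` inside `N(U, V)`; so `N(U, V)` is thickly syndetic. Thickly
syndetic sets form a filter stable under `n ↦ k n`, which yields a common time for `f, f², …, f^m`: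
each `f^{(∗m)}` is transitive and, by Baire, has a point `ξ` with dense orbit.

By induction on `m`, the closure `Z` of `{(x, fⁿ x, f²ⁿ x, …, f^{mn} x) : n ≥ 1}` is all of
`X × X^m`. The induction hypothesis and surjectivity of `f` make the projection of `Z` to `X^m`
onto, so some fibre of `Z` contains `ξ`; as `Z` is invariant under `id × f^{(∗m)}`, that fibre is
everything, and as `Z` is invariant under `f × (f × ⋯ × f)`, minimality spreads this to every fibre.
Baire's theorem once more turns this density into Δ-transitivity.
-/

theorem Syndetic.mono {S T : Set ℕ} (hST : S ⊆ T) (hS : Syndetic S) : Syndetic T := by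
  obtain ⟨L, hL, hS⟩ := hS
  exact ⟨L, hL, fun n => (hS n).imp fun k ⟨hk, hnk⟩ => ⟨hST hk, hnk⟩⟩

theorem Syndetic.nonempty {S : Set ℕ} (hS : Syndetic S) : S.Nonempty := by
  obtain ⟨L, -, hS⟩ := hS
  obtain ⟨k, hk, -⟩ := hS 0
  exact ⟨k, hk⟩

def thicklySyndetic : Filter ℕ where
  sets := {S | ∀ L, Syndetic {s | ∀ j ≤ L, s + j ∈ S}}
  univ_sets _ := ⟨1, one_pos, fun n => ⟨n, fun _ _ => trivial, le_rfl, by omega⟩⟩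
  sets_of_superset {S T} hS hST L :=
    (hS L).mono fun (s : ℕ) (hs : ∀ j ≤ L, s + j ∈ S) j hj => hST (hs j hj)
  inter_sets {S T} hS hT L := by
    obtain ⟨GT, -, hT⟩ := hT L
    obtain ⟨GS, hGS, hS⟩ := hS (L + GT)
    refine ⟨GS + GT, by omega, fun t => ?_⟩
    obtain ⟨b, hb, htb, hbt⟩ := hS t
    obtain ⟨c, hc, hbc, hcb⟩ := hT b
    refine ⟨c, fun j hj => ⟨?_, hc j hj⟩, by omega, by omega⟩
    simpa [show b + (c - b + j) = c + j by omega] using hb (c - b + j) (by omega)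

instance : thicklySyndetic.NeBot :=
  forall_mem_nonempty_iff_neBot.mp fun _ hS =>
    let ⟨s, hs⟩ := (hS 0).nonempty
    ⟨s, hs 0 le_rfl⟩

theorem thicklySyndetic_le_atTop : thicklySyndetic ≤ atTop :=
  atTop_basis.ge_iff.mpr fun a _ L =>
    ⟨a + 1, by omega, fun n =>
      ⟨max n a, fun _ _ => mem_Ici.mpr (by omega), le_max_left _ _, by omega⟩⟩

theorem tendsto_mul_left_thicklySyndetic {k : ℕ} (hk : 0 < k) :
    Tendsto (k * ·) thicklySyndetic thicklySyndetic := by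
  intro S hS L
  obtain ⟨G, -, hS⟩ := hS (k * L + k)
  refine ⟨G + 1, by omega, fun t => ?_⟩
  obtain ⟨b, hb, htb, hbt⟩ := hS (k * t)
  -- the first multiple of `k` after `b` starts a block of length `k * L` in `[b, b + k * L + k]`
  have hdiv := Nat.div_add_mod b k
  have hmod := Nat.mod_lt b hk
  refine ⟨b / k + 1, fun j hj => ?_, ?_, ?_⟩
  · have hkj : k * j ≤ k * L := Nat.mul_le_mul_left k hj
    have := hb (k * (b / k + 1 + j) - b) (by rw [mul_add, mul_add]; omega)
    rwa [show b + (k * (b / k + 1 + j) - b) = k * (b / k + 1 + j) by rw [mul_add, mul_add]; omega]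
      at this
  · by_contra! h
    have : k * (b / k + 1) ≤ k * t := Nat.mul_le_mul_left k (by omega)
    rw [mul_add] at this
    omega
  · have : k * (b / k) ≤ k * (t + G) := by
      have := Nat.le_mul_of_pos_left G hk
      rw [mul_add]; omega
    have := Nat.le_of_mul_le_mul_left this hk
    omega

section NSet

variable {X : Type*} {f : X → X}

theorem mem_nSet {U V : Set X} {n : ℕ} : n ∈ NSet f U V ↔ 0 < n ∧ ∃ x ∈ U, f^[n] x ∈ V := by
  simp only [NSet, mem_ofPred_eq, image_inter_nonempty_iff]
  rfl

theorem NSet.mono {U V U' V' : Set X} (hU : U ⊆ U') (hV : V ⊆ V') : NSet f U V ⊆ NSet f U' V' :=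
  fun _ hn => ⟨hn.1, hn.2.mono (inter_subset_inter (image_mono hU) hV)⟩

theorem NSet.add_mem_of_mem_preimage {U V : Set X} {n j : ℕ} (h : n ∈ NSet f U (f^[j] ⁻¹' V)) :
    n + j ∈ NSet f U V := by
  obtain ⟨hn, x, hx, hxV⟩ := mem_nSet.mp h
  exact mem_nSet.mpr ⟨by omega, x, hx, by rwa [add_comm, iterate_add_apply]⟩

end NSet

section Minimal

variable {X : Type*} [TopologicalSpace X] {f : X → X}

theorem MinimalMap.surjective [CompactSpace X] [T2Space X] (hmin : MinimalMap f)
    (hf : Continuous f) : Surjective f := by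
  rcases isEmpty_or_nonempty X with _ | _
  · exact fun y => isEmptyElim y
  · exact range_eq_univ.mp <| hmin _ (isCompact_range hf).isClosed (range_nonempty f)
      (image_subset_range _ _)

theorem MinimalMap.exists_iterate_mem (hmin : MinimalMap f) (hf : Continuous f) (x : X)
    {U : Set X} (hU : IsOpen U) (hUne : U.Nonempty) : ∃ n, f^[n] x ∈ U := by
  have horbit : closure (range fun n => f^[n] x) = univ := by
    refine hmin _ isClosed_closure ⟨x, subset_closure ⟨0, rfl⟩⟩ ?_
    refine (image_closure_subset_closure_image hf).trans (closure_mono ?_)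
    rintro _ ⟨_, ⟨n, rfl⟩, rfl⟩
    exact ⟨n + 1, iterate_succ_apply' f n x⟩
  obtain ⟨_, hy, n, rfl⟩ := (dense_iff_closure_eq.mpr horbit).inter_open_nonempty U hU hUne
  exact ⟨n, hy⟩

theorem MinimalMap.exists_uniform_return [CompactSpace X] (hmin : MinimalMap f)
    (hf : Continuous f) {V : Set X} (hV : IsOpen V) (hVne : V.Nonempty) :
    ∃ M, ∀ x, ∃ j, 0 < j ∧ j ≤ M ∧ f^[j] x ∈ V := by
  have hcover : univ ⊆ ⋃ n, f^[n + 1] ⁻¹' V := fun x _ => by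
    obtain ⟨n, hn⟩ := hmin.exists_iterate_mem hf (f x) hV hVne
    exact mem_iUnion.mpr ⟨n, by rwa [mem_preimage, iterate_succ_apply]⟩
  obtain ⟨s, hs⟩ := isCompact_univ.elim_finite_subcover _
    (fun n => hV.preimage (hf.iterate _)) hcover
  refine ⟨s.sup id + 1, fun x => ?_⟩
  obtain ⟨n, hn, hx⟩ := mem_iUnion₂.mp (hs (mem_univ x))
  exact ⟨n + 1, n.succ_pos, Nat.succ_le_succ (s.le_sup (f := id) hn), hx⟩

theorem MinimalMap.syndeticallyTransitive [CompactSpace X] (hmin : MinimalMap f)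
    (hf : Continuous f) : SyndeticallyTransitive f := by
  intro U V _ hV ⟨x, hx⟩ hVne
  obtain ⟨M, hM⟩ := hmin.exists_uniform_return hf hV hVne
  obtain ⟨j₀, hj₀, hj₀M, -⟩ := hM x
  refine ⟨M, by omega, fun t => ?_⟩
  obtain ⟨j, hj, hjM, hjV⟩ := hM (f^[t] x)
  exact ⟨t + j, mem_nSet.mpr ⟨by omega, x, hx, by rwa [add_comm, iterate_add_apply]⟩,
    by omega, by omega⟩

end Minimal

section WeaklyMixing

variable {X : Type*} [TopologicalSpace X] {f : X → X}

/-- Furstenberg's intersection lemma. -/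
theorem WeaklyMixing.exists_nSet_subset_inter (hwm : WeaklyMixing f) (hf : Continuous f)
    {C₁ D₁ C₂ D₂ : Set X} (hC₁ : IsOpen C₁) (hD₁ : IsOpen D₁) (hC₂ : IsOpen C₂) (hD₂ : IsOpen D₂)
    (hC₁ne : C₁.Nonempty) (hD₁ne : D₁.Nonempty) (hC₂ne : C₂.Nonempty) (hD₂ne : D₂.Nonempty) :
    ∃ A B : Set X, IsOpen A ∧ IsOpen B ∧ A.Nonempty ∧ B.Nonempty ∧
      NSet f A B ⊆ NSet f C₁ D₁ ∩ NSet f C₂ D₂ := by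
  obtain ⟨n, hn⟩ : ∃ n, n ∈ NSet (Prod.map f f) (C₁ ×ˢ D₁) (C₂ ×ˢ D₂) :=
    hwm _ _ (hC₁.prod hD₁) (hC₂.prod hD₂) (hC₁ne.prod hD₁ne) (hC₂ne.prod hD₂ne)
  obtain ⟨-, ⟨x, y⟩, ⟨hx, hy⟩, hxy⟩ := mem_nSet.mp hn
  rw [Prod.map_iterate] at hxy
  refine ⟨C₁ ∩ f^[n] ⁻¹' C₂, D₁ ∩ f^[n] ⁻¹' D₂, hC₁.inter (hC₂.preimage (hf.iterate n)),
    hD₁.inter (hD₂.preimage (hf.iterate n)), ⟨x, hx, hxy.1⟩, ⟨y, hy, hxy.2⟩,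
    fun k hk => ⟨NSet.mono inter_subset_left inter_subset_left hk, ?_⟩⟩
  obtain ⟨hk, z, hz, hzk⟩ := mem_nSet.mp hk
  refine mem_nSet.mpr ⟨hk, f^[n] z, hz.2, ?_⟩
  rw [(Commute.iterate_iterate_self f k n).eq]
  exact hzk.2

theorem WeaklyMixing.exists_nSet_subset_biInter [Nonempty X] (hwm : WeaklyMixing f)
    (hf : Continuous f) {ι : Type*} (s : Finset ι) {C D : ι → Set X} (hC : ∀ i, IsOpen (C i))
    (hD : ∀ i, IsOpen (D i)) (hCne : ∀ i, (C i).Nonempty) (hDne : ∀ i, (D i).Nonempty) :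
    ∃ A B : Set X, IsOpen A ∧ IsOpen B ∧ A.Nonempty ∧ B.Nonempty ∧
      NSet f A B ⊆ ⋂ i ∈ s, NSet f (C i) (D i) := by
  classical
  induction s using Finset.induction_on with
  | empty => exact ⟨univ, univ, isOpen_univ, isOpen_univ, univ_nonempty, univ_nonempty, by simp⟩
  | insert i s _ ih =>
    obtain ⟨A, B, hA, hB, hAne, hBne, hAB⟩ := ih
    obtain ⟨A', B', hA', hB', hA'ne, hB'ne, hA'B'⟩ :=
      hwm.exists_nSet_subset_inter hf hA hB (hC i) (hD i) hAne hBne (hCne i) (hDne i)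
    refine ⟨A', B', hA', hB', hA'ne, hB'ne, fun n hn => ?_⟩
    rw [Finset.set_biInter_insert]
    exact ⟨(hA'B' hn).2, hAB (hA'B' hn).1⟩

theorem WeaklyMixing.nSet_mem_thicklySyndetic (hwm : WeaklyMixing f) (hf : Continuous f)
    (hst : SyndeticallyTransitive f) (hsurj : Surjective f) {U V : Set X} (hU : IsOpen U)
    (hV : IsOpen V) (hUne : U.Nonempty) (hVne : V.Nonempty) : NSet f U V ∈ thicklySyndetic := by
  have := hUne.to_type
  intro L
  obtain ⟨A, B, hA, hB, hAne, hBne, hAB⟩ :=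
    hwm.exists_nSet_subset_biInter hf (Finset.range (L + 1)) (C := fun _ => U)
      (D := fun j => f^[j] ⁻¹' V) (fun _ => hU) (fun j => hV.preimage (hf.iterate j))
      (fun _ => hUne) (fun j => hVne.preimage (hsurj.iterate j))
  refine (hst A B hA hB hAne hBne).mono fun n hn j hj => NSet.add_mem_of_mem_preimage ?_
  exact mem_iInter₂.mp (hAB hn) j (Finset.mem_range.mpr (by omega))

end WeaklyMixing

section MultiTransitive

theorem starMap_iterate_apply {X : Type*} (f : X → X) (m n : ℕ) (ξ : Fin m → X) (i : Fin m) :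
    (starMap f m)^[n] ξ i = f^[((i : ℕ) + 1) * n] (ξ i) := by
  rw [iterate_mul]
  exact congrFun (congrFun (Pi.map_iterate (fun i : Fin m => f^[i + 1]) n) ξ) i

theorem commute_starMap_comp_left {X : Type*} (f : X → X) (m : ℕ) :
    Function.Commute (starMap f m) (f ∘ ·) :=
  fun ξ => funext fun i => ((Commute.self_iterate f _).eq (ξ i)).symm

variable {X : Type*} [TopologicalSpace X] {f : X → X}

theorem Continuous.starMap (hf : Continuous f) (m : ℕ) : Continuous (starMap f m) :=
  continuous_pi fun i => (hf.iterate _).comp (continuous_apply i)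

theorem multiTransitive_of_nSet_mem_thicklySyndetic
    (h : ∀ U V : Set X, IsOpen U → IsOpen V → U.Nonempty → V.Nonempty →
      NSet f U V ∈ thicklySyndetic) :
    MultiTransitive f := by
  intro m _ U V hU hV ⟨ξ, hξ⟩ ⟨η, hη⟩
  obtain ⟨A, hA, hAU⟩ := isOpen_pi_iff'.mp hU ξ hξ
  obtain ⟨B, hB, hBV⟩ := isOpen_pi_iff'.mp hV η hη
  have hmult : ∀ᶠ n in thicklySyndetic,
      0 < n ∧ ∀ i : Fin m, ((i : ℕ) + 1) * n ∈ NSet f (A i) (B i) :=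
    ((eventually_gt_atTop 0).filter_mono thicklySyndetic_le_atTop).and <|
      eventually_all.mpr fun i => tendsto_mul_left_thicklySyndetic i.succ_pos <|
        h _ _ (hA i).1 (hB i).1 ⟨_, (hA i).2⟩ ⟨_, (hB i).2⟩
  obtain ⟨n, hn, hnAB⟩ := hmult.exists
  choose _ x hx hxB using fun i => mem_nSet.mp (hnAB i)
  show ∃ n, n ∈ NSet _ U V
  refine ⟨n, mem_nSet.mpr ⟨hn, x, hAU fun i _ => hx i, hBV fun i _ => ?_⟩⟩
  rw [starMap_iterate_apply]
  exact hxB i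

end MultiTransitive

section Baire

theorem mem_residual_setOf_dense_range {α β : Type*} [TopologicalSpace α] [TopologicalSpace β]
    [SecondCountableTopology β] {g : ℕ → α → β} (hg : ∀ n, Continuous (g n))
    (h : ∀ U V, IsOpen U → IsOpen V → U.Nonempty → V.Nonempty → ∃ n, ∃ x ∈ U, g n x ∈ V) :
    {x | Dense (range fun n => g n x)} ∈ residual α := by
  obtain ⟨b, hbc, -, hb⟩ := TopologicalSpace.exists_countable_basis β
  have hvisit : ∀ V ∈ b, ∀ᶠ x in residual α, V.Nonempty → ∃ n, g n x ∈ V := by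
    intro V hV
    rcases V.eq_empty_or_nonempty with rfl | hVne
    · exact Eventually.of_forall fun _ h => absurd h not_nonempty_empty
    refine mem_of_superset (residual_of_dense_open
      (isOpen_iUnion fun n => (hb.isOpen hV).preimage (hg n)) ?_) fun x hx _ => mem_iUnion.mp hx
    refine dense_iff_inter_open.mpr fun U hU hUne => ?_
    obtain ⟨n, x, hx, hxV⟩ := h U V hU (hb.isOpen hV) hUne hVne
    exact ⟨x, hx, mem_iUnion.mpr ⟨n, hxV⟩⟩
  filter_upwards [(eventually_countable_ball hbc).mpr hvisit] with x hx
  refine hb.dense_iff.mpr fun V hV hVne => ?_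
  obtain ⟨n, hn⟩ := hx V hV hVne
  exact ⟨g n x, hn, n, rfl⟩

theorem TopTransitive.exists_dense_orbit {Y : Type*} [TopologicalSpace Y]
    [SecondCountableTopology Y] [BaireSpace Y] [Nonempty Y] {S : Y → Y} (h : TopTransitive S)
    (hS : Continuous S) : ∃ ξ, Dense (range fun n => S^[n] ξ) := by
  refine (dense_of_mem_residual (mem_residual_setOf_dense_range (hS.iterate ·)
    fun U V hU hV hUne hVne => ?_)).nonempty
  obtain ⟨n, hn⟩ : ∃ n, n ∈ NSet S U V := h U V hU hV hUne hVne
  obtain ⟨-, x, hx, hxV⟩ := mem_nSet.mp hn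
  exact ⟨n, x, hx, hxV⟩

end Baire

section DiagonalOrbits

variable {X : Type*} [TopologicalSpace X] {f : X → X}

theorem MinimalMap.eq_univ_of_mapsTo {Y : Type*} [TopologicalSpace Y] (hmin : MinimalMap f)
    {S g : Y → Y} {Z : Set (X × Y)} (hZ : IsClosed Z) {x₀ : X} {ξ : Y}
    (hξ : Dense (range fun n => S^[n] ξ)) (hx₀ : (x₀, ξ) ∈ Z) (hSZ : MapsTo (Prod.map id S) Z Z)
    (hg : Surjective g) (hfgZ : MapsTo (Prod.map f g) Z Z) : Z = univ := by
  set K := {x | ∀ y, (x, y) ∈ Z}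
  have hK : IsClosed K := by
    simp only [K, ofPred_forall]
    exact isClosed_iInter fun y => hZ.preimage (continuous_id.prodMk continuous_const)
  have hx₀K : x₀ ∈ K := by
    have horbit : range (fun n => S^[n] ξ) ⊆ {y | (x₀, y) ∈ Z} := by
      rintro _ ⟨n, rfl⟩
      simpa [Prod.map_iterate] using hSZ.iterate n hx₀
    exact fun y => (hZ.preimage (continuous_const.prodMk continuous_id)).closure_subset_iff.mpr
      horbit (hξ y)
  have hfK : f '' K ⊆ K := by
    rintro _ ⟨x, hx, rfl⟩ y
    obtain ⟨y', rfl⟩ := hg y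
    exact hfgZ (hx y')
  have hKuniv := hmin K hK ⟨x₀, hx₀K⟩ hfK
  exact eq_univ_of_forall fun q => (hKuniv ▸ mem_univ q.1 : q.1 ∈ K) q.2

theorem denseRange_starMap_iterate_diag_succ (hsurj : Surjective f) {m : ℕ}
    (h : DenseRange fun p : X × ℕ => (p.1, (starMap f m)^[p.2 + 1] fun _ => p.1)) :
    DenseRange fun p : X × ℕ => (starMap f (m + 1))^[p.2 + 1] fun _ => p.1 := by
  -- `(f^{k+1} y, f^{2(k+1)} y, …)` is `f^{k+1} y` consed onto the `m`-tuple for `f^{k+1} y`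
  have hcons : (fun p : X × ℕ => (starMap f (m + 1))^[p.2 + 1] fun _ => p.1) =
      (fun q => Fin.cons q.1 q.2) ∘ (fun p : X × ℕ => (p.1, (starMap f m)^[p.2 + 1] fun _ => p.1)) ∘
        fun p => (f^[p.2 + 1] p.1, p.2) := by
    funext ⟨y, k⟩ i
    refine Fin.cases ?_ (fun j => ?_) i
    · simp [starMap_iterate_apply]
    · simp only [comp_apply, Fin.cons_succ, starMap_iterate_apply, Fin.val_succ]
      rw [← iterate_add_apply]
      congr 1
      ring
  have hσ : Surjective fun p : X × ℕ => (f^[p.2 + 1] p.1, p.2) := fun ⟨x, k⟩ =>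
    let ⟨y, hy⟩ := hsurj.iterate (k + 1) x
    ⟨(y, k), by simp [hy]⟩
  rw [hcons, DenseRange, ← comp_assoc, hσ.range_comp]
  have hconsSurj : Surjective fun q : X × (Fin m → X) => (Fin.cons q.1 q.2 : Fin (m + 1) → X) :=
    fun q => ⟨(q 0, Fin.tail q), Fin.cons_self_tail q⟩
  exact hconsSurj.denseRange.comp h
    (Continuous.finCons (A := fun _ => X) continuous_fst continuous_snd)

theorem MinimalMap.denseRange_prod_starMap_iterate_diag [CompactSpace X] [T2Space X]
    [SecondCountableTopology X] (hmin : MinimalMap f) (hf : Continuous f)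
    (hmt : MultiTransitive f) :
    ∀ m, DenseRange fun p : X × ℕ => (p.1, (starMap f m)^[p.2 + 1] fun _ => p.1)
  | 0 => Surjective.denseRange fun q => ⟨(q.1, 0), Prod.ext rfl (Subsingleton.elim _ _)⟩
  | m + 1 => by
    set φ := fun p : X × ℕ => (p.1, (starMap f (m + 1))^[p.2 + 1] fun _ => p.1)
    rcases isEmpty_or_nonempty X with _ | _
    · exact Surjective.denseRange fun q => isEmptyElim q.1
    have hsurj := hmin.surjective hf
    obtain ⟨ξ, hξ⟩ := (hmt (m + 1) m.succ_pos).exists_dense_orbit (hf.starMap _)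
    have htail := denseRange_starMap_iterate_diag_succ hsurj
      (hmin.denseRange_prod_starMap_iterate_diag hf hmt m)
    -- the projection of the compact set `closure (range φ)` is closed and contains all tails
    obtain ⟨⟨x₀, _⟩, hx₀, rfl⟩ : ξ ∈ Prod.snd '' closure (range φ) := by
      refine ((isClosed_closure.isCompact.image continuous_snd).isClosed.closure_subset_iff.mpr ?_)
        (htail ξ)
      rintro _ ⟨p, rfl⟩
      exact ⟨φ p, subset_closure (mem_range_self p), rfl⟩
    refine denseRange_iff_closure_range.mpr (hmin.eq_univ_of_mapsTo isClosed_closure hξ hx₀ ?_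
      hsurj.comp_left ?_)
    · refine MapsTo.closure ?_ (continuous_id.prodMap (hf.starMap _))
      rintro _ ⟨⟨x, k⟩, rfl⟩
      exact ⟨(x, k + 1), Prod.ext rfl (iterate_succ_apply' _ _ _)⟩
    · refine MapsTo.closure ?_ (hf.prodMap (continuous_pi fun i => hf.comp (continuous_apply i)))
      rintro _ ⟨⟨x, k⟩, rfl⟩
      exact ⟨(f x, k), Prod.ext rfl (((commute_starMap_comp_left f _).iterate_left _).eq _)⟩

end DiagonalOrbits

/-- A weakly mixing and minimal continuous map on a compact metric space
is Δ-transitive; equivalently, for every `m ≥ 1` and nonempty open `U, V₁, …, V_m` there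
is `n ≥ 1` with `U ∩ f⁻ⁿ(V₁) ∩ ⋯ ∩ f⁻ᵐⁿ(V_m) ≠ ∅`. -/
theorem statement4 {X : Type*} [MetricSpace X] [CompactSpace X] (f : X → X)
    (hf : Continuous f) (hwm : WeaklyMixing f) (hmin : MinimalMap f) :
    DeltaTransitive f ∧
      ∀ m : ℕ, 1 ≤ m → ∀ U : Set X, IsOpen U → U.Nonempty →
        ∀ V : Fin m → Set X, (∀ i, IsOpen (V i)) → (∀ i, (V i).Nonempty) →
          ∃ n : ℕ, 1 ≤ n ∧
            (U ∩ ⋂ i : Fin m, f^[((i : ℕ) + 1) * n] ⁻¹' V i).Nonempty := by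
  have hmt : MultiTransitive f := multiTransitive_of_nSet_mem_thicklySyndetic
    fun _ _ hU hV hUne hVne => hwm.nSet_mem_thicklySyndetic hf
      (hmin.syndeticallyTransitive hf) (hmin.surjective hf) hU hV hUne hVne
  have hdense := hmin.denseRange_prod_starMap_iterate_diag hf hmt
  constructor
  · intro m _
    have hg : ∀ n, Continuous fun x : X => (starMap f m)^[n] fun _ => x := fun n =>
      ((hf.starMap m).iterate n).comp (continuous_pi fun _ => continuous_id)
    refine ⟨_, mem_residual_setOf_dense_range hg fun U V hU hV hUne hVne => ?_, fun _ hx => hx⟩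
    obtain ⟨⟨x, k⟩, hx, hxV⟩ := (hdense m).exists_mem_open (hU.prod hV) (hUne.prod hVne)
    exact ⟨k + 1, x, hx, hxV⟩
  · intro m _ U hU hUne V hV hVne
    obtain ⟨⟨x, k⟩, hx, hxV⟩ := (hdense m).exists_mem_open
      (hU.prod (isOpen_set_pi finite_univ fun i _ => hV i))
      (hUne.prod (univ_pi_nonempty_iff.mpr hVne))
    refine ⟨k + 1, by omega, x, hx, mem_iInter.mpr fun i => ?_⟩
    simpa [starMap_iterate_apply] using hxV i (mem_univ i)
end

section
/- For any P ⊆ ℕ, the spacing shift σ_P : Σ_P → Σ_P is weakly mixing if and only if P is a thick set. -/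
open Set Function

/-- The spacing shift `Σ_P ⊆ {0,1}^ℕ`: all sequences such that whenever two distinct
positions carry the symbol `1`, the distance between them lies in `P`. -/
def SpacingSubshift (P : Set ℕ) : Set (ℕ → Bool) :=
  {x | ∀ i j : ℕ, i < j → x i = true → x j = true → j - i ∈ P}

theorem shift_mem_spacingSubshift {P : Set ℕ} {x : ℕ → Bool}
    (hx : x ∈ SpacingSubshift P) : (fun n => x (n + 1)) ∈ SpacingSubshift P := by
  intro i j hij hi hj
  have h := hx (i + 1) (j + 1) (by omega) hi hj
  have : j + 1 - (i + 1) = j - i := by omega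
  rwa [this] at h

/-- The shift map `σ_P : Σ_P → Σ_P` of the spacing shift. -/
def sigmaP (P : Set ℕ) : SpacingSubshift P → SpacingSubshift P :=
  fun x => ⟨fun n => x.1 (n + 1), shift_mem_spacingSubshift x.2⟩

/-- The cylinder `[1]_P` of points of `Σ_P` whose 0th coordinate is `1`. -/
def oneCyl (P : Set ℕ) : Set (SpacingSubshift P) := {x | x.1 0 = true}

/-- A set `P ⊆ ℕ` is thick if it contains arbitrarily long intervals of
consecutive integers. -/
def Thick (P : Set ℕ) : Prop :=
  ∀ n : ℕ, ∃ k : ℕ, Set.Ico k (k + n) ⊆ P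

/-- `P(m) = ⋃_{k ≥ 1} {m^{2k-1}, …, m^{2k} - 1}`. -/
def ProgressionSet (m : ℕ) : Set ℕ :=
  {n | ∃ k : ℕ, 1 ≤ k ∧ m ^ (2 * k - 1) ≤ n ∧ n < m ^ (2 * k)}

/-! If `P` is thick, a cylinder pattern and a shifted copy of another one can be glued inside
`Σ_P` whenever all distances between the two blocks fall into an interval contained in `P`; doing
this with the same offset in both coordinates makes `σ_P × σ_P` transitive. Conversely, for a
weakly mixing map every return-time set `N(U, V)` is thick (Furstenberg's intersection lemma), and
`N([1], [1]) ⊆ P` since a point of `Σ_P` with `1`s at positions `0` and `n` forces `n ∈ P`. -/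

theorem mem_nSet_iff {X : Type*} {f : X → X} {U V : Set X} {n : ℕ} :
    n ∈ NSet f U V ↔ 0 < n ∧ ∃ u ∈ U, f^[n] u ∈ V := by
  simp only [NSet, Set.mem_ofPred_eq, Set.image_inter_nonempty_iff]
  rfl

section WeaklyMixing

variable {X : Type*} [TopologicalSpace X] {f : X → X}

theorem weaklyMixing_iff_nSet_inter_nonempty :
    WeaklyMixing f ↔ ∀ U₁ V₁ U₂ V₂ : Set X, IsOpen U₁ → IsOpen V₁ → IsOpen U₂ → IsOpen V₂ →
      U₁.Nonempty → V₁.Nonempty → U₂.Nonempty → V₂.Nonempty →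
        (NSet f U₁ V₁ ∩ NSet f U₂ V₂).Nonempty := by
  have iterate_eq (n : ℕ) (p : X × X) :
      (fun q : X × X => (f q.1, f q.2))^[n] p = (f^[n] p.1, f^[n] p.2) :=
    congrFun (Prod.map_iterate f f n) p
  constructor
  · intro h U₁ V₁ U₂ V₂ hU₁ hV₁ hU₂ hV₂ hU₁n hV₁n hU₂n hV₂n
    obtain ⟨n, hn, _, ⟨u, hu, rfl⟩, hv⟩ :=
      h _ _ (hU₁.prod hU₂) (hV₁.prod hV₂) (hU₁n.prod hU₂n) (hV₁n.prod hV₂n)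
    rw [iterate_eq] at hv
    exact ⟨n, mem_nSet_iff.2 ⟨hn, u.1, hu.1, hv.1⟩, mem_nSet_iff.2 ⟨hn, u.2, hu.2, hv.2⟩⟩
  · rintro h O O' hO hO' ⟨p, hp⟩ ⟨q, hq⟩
    obtain ⟨U₁, U₂, hU₁, hU₂, hp₁, hp₂, hUO⟩ := isOpen_prod_iff.1 hO p.1 p.2 hp
    obtain ⟨V₁, V₂, hV₁, hV₂, hq₁, hq₂, hVO'⟩ := isOpen_prod_iff.1 hO' q.1 q.2 hq
    obtain ⟨n, hn₁, hn₂⟩ := h U₁ V₁ U₂ V₂ hU₁ hV₁ hU₂ hV₂ ⟨_, hp₁⟩ ⟨_, hq₁⟩ ⟨_, hp₂⟩ ⟨_, hq₂⟩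
    obtain ⟨hn, u₁, hu₁, hv₁⟩ := mem_nSet_iff.1 hn₁
    obtain ⟨-, u₂, hu₂, hv₂⟩ := mem_nSet_iff.1 hn₂
    refine ⟨n, hn, _, ⟨(u₁, u₂), hUO ⟨hu₁, hu₂⟩, rfl⟩, ?_⟩
    rw [iterate_eq]
    exact hVO' ⟨hv₁, hv₂⟩

theorem WeaklyMixing.topTransitive (h : WeaklyMixing f) : TopTransitive f := by
  intro U V hU hV hUn hVn
  obtain ⟨n, hn, -⟩ :=
    weaklyMixing_iff_nSet_inter_nonempty.1 h U V U V hU hV hU hV hUn hVn hUn hVn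
  exact ⟨n, hn⟩

theorem TopTransitive.preimage_iterate_nonempty (hf : Continuous f) (h : TopTransitive f)
    {V : Set X} (hV : IsOpen V) (hVn : V.Nonempty) (i : ℕ) : (f^[i] ⁻¹' V).Nonempty := by
  induction i with
  | zero => exact hVn
  | succ i ih =>
    -- a return `f^[n] w ∈ W` of `W = f^[i] ⁻¹' V` to itself puts `f^[n - 1] w` in `f^[i+1] ⁻¹' V`
    have hW : IsOpen (f^[i] ⁻¹' V) := hV.preimage (hf.iterate i)
    obtain ⟨n, hn, _, ⟨w, -, rfl⟩, hw⟩ := h _ _ hW hW ih ih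
    refine ⟨f^[n - 1] w, ?_⟩
    rwa [Set.mem_preimage, ← Function.iterate_add_apply, show i + 1 + (n - 1) = i + n by omega,
      Function.iterate_add_apply]

/-- Furstenberg's intersection lemma. -/
theorem WeaklyMixing.exists_nSet_subset_inter_s16 (h : WeaklyMixing f) (hf : Continuous f)
    {U₁ V₁ U₂ V₂ : Set X} (hU₁ : IsOpen U₁) (hV₁ : IsOpen V₁) (hU₂ : IsOpen U₂) (hV₂ : IsOpen V₂)
    (hU₁n : U₁.Nonempty) (hV₁n : V₁.Nonempty) (hU₂n : U₂.Nonempty) (hV₂n : V₂.Nonempty) :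
    ∃ U V : Set X, IsOpen U ∧ IsOpen V ∧ U.Nonempty ∧ V.Nonempty ∧
      NSet f U V ⊆ NSet f U₁ V₁ ∩ NSet f U₂ V₂ := by
  obtain ⟨n, hnU, hnV⟩ :=
    weaklyMixing_iff_nSet_inter_nonempty.1 h U₁ U₂ V₁ V₂ hU₁ hU₂ hV₁ hV₂ hU₁n hU₂n hV₁n hV₂n
  obtain ⟨-, u, hu₁, hu₂⟩ := mem_nSet_iff.1 hnU
  obtain ⟨-, v, hv₁, hv₂⟩ := mem_nSet_iff.1 hnV
  refine ⟨U₁ ∩ f^[n] ⁻¹' U₂, V₁ ∩ f^[n] ⁻¹' V₂, hU₁.inter (hU₂.preimage (hf.iterate n)),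
    hV₁.inter (hV₂.preimage (hf.iterate n)), ⟨u, hu₁, hu₂⟩, ⟨v, hv₁, hv₂⟩, fun m hm => ?_⟩
  obtain ⟨hm, w, ⟨hw₁, hw₂⟩, hmw₁, hmw₂⟩ := mem_nSet_iff.1 hm
  refine ⟨mem_nSet_iff.2 ⟨hm, w, hw₁, hmw₁⟩, mem_nSet_iff.2 ⟨hm, f^[n] w, hw₂, ?_⟩⟩
  rwa [Set.mem_preimage, Function.Commute.iterate_iterate_self] at hmw₂

theorem WeaklyMixing.exists_nSet_subset_biInter_s16 (h : WeaklyMixing f) (hf : Continuous f)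
    {U V : ℕ → Set X} (hU : ∀ i, IsOpen (U i)) (hV : ∀ i, IsOpen (V i))
    (hUn : ∀ i, (U i).Nonempty) (hVn : ∀ i, (V i).Nonempty) (L : ℕ) :
    ∃ U' V' : Set X, IsOpen U' ∧ IsOpen V' ∧ U'.Nonempty ∧ V'.Nonempty ∧
      NSet f U' V' ⊆ ⋂ i < L, NSet f (U i) (V i) := by
  induction L with
  | zero => exact ⟨U 0, V 0, hU 0, hV 0, hUn 0, hVn 0, by simp⟩
  | succ L ih =>
    obtain ⟨U', V', hU', hV', hU'n, hV'n, hsub⟩ := ih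
    obtain ⟨U'', V'', hU'', hV'', hU''n, hV''n, hsub'⟩ :=
      h.exists_nSet_subset_inter_s16 hf hU' hV' (hU L) (hV L) hU'n hV'n (hUn L) (hVn L)
    refine ⟨U'', V'', hU'', hV'', hU''n, hV''n, fun m hm => Set.mem_iInter₂.2 fun i hi => ?_⟩
    rcases Nat.lt_succ_iff_lt_or_eq.1 hi with hi | rfl
    · exact Set.mem_iInter₂.1 (hsub (hsub' hm).1) i hi
    · exact (hsub' hm).2

theorem WeaklyMixing.thick_nSet (h : WeaklyMixing f) (hf : Continuous f) {U V : Set X}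
    (hU : IsOpen U) (hV : IsOpen V) (hUn : U.Nonempty) (hVn : V.Nonempty) :
    Thick (NSet f U V) := by
  intro L
  have hV' (i : ℕ) : IsOpen (f^[i] ⁻¹' V) := hV.preimage (hf.iterate i)
  have hV'n := h.topTransitive.preimage_iterate_nonempty hf hV hVn
  obtain ⟨U', V', hU', hV'', hU'n, hV''n, hsub⟩ :=
    h.exists_nSet_subset_biInter_s16 hf (fun _ => hU) hV' (fun _ => hUn) hV'n L
  obtain ⟨n, hn⟩ := h.topTransitive U' V' hU' hV'' hU'n hV''n
  have hn_mem := Set.mem_iInter₂.1 (hsub (show n ∈ NSet f U' V' from hn))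
  refine ⟨n, fun m ⟨hnm, hmL⟩ => ?_⟩
  obtain ⟨-, u, hu, hmu⟩ := mem_nSet_iff.1 (hn_mem (m - n) (by omega))
  refine mem_nSet_iff.2 ⟨by omega, u, hu, ?_⟩
  rwa [Set.mem_preimage, ← Function.iterate_add_apply, show m - n + n = m by omega] at hmu

end WeaklyMixing

theorem PiNat.exists_cylinder_subset {E : ℕ → Type*} [∀ n, TopologicalSpace (E n)]
    [∀ n, DiscreteTopology (E n)] {S : Set (∀ n, E n)} {U : Set S} (hU : IsOpen U) {u : S}
    (hu : u ∈ U) : ∃ N : ℕ, ∀ y : S, y.1 ∈ PiNat.cylinder u.1 N → y ∈ U := by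
  have hUu := hU.mem_nhds hu
  rw [nhds_induced] at hUu
  obtain ⟨W, hW, hWU⟩ := hUu
  obtain ⟨_, ⟨x, N, rfl⟩, hux, hxW⟩ := (PiNat.isTopologicalBasis_cylinders E).mem_nhds_iff.1 hW
  rw [PiNat.mem_cylinder_iff_eq] at hux
  exact ⟨N, fun y hy => hWU (hxW (hux ▸ hy))⟩

section SpacingShift

variable {P : Set ℕ}

theorem sigmaP_iterate_apply (n : ℕ) (x : SpacingSubshift P) (k : ℕ) :
    ((sigmaP P)^[n] x).1 k = x.1 (k + n) := by
  induction n generalizing x with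
  | zero => rfl
  | succ n ih => exact ih (sigmaP P x)

theorem continuous_sigmaP : Continuous (sigmaP P) := by
  apply Continuous.subtype_mk
  exact continuous_pi fun n => (continuous_apply (n + 1)).comp continuous_subtype_val

theorem isOpen_oneCyl : IsOpen (oneCyl P) :=
  (isOpen_discrete ({true} : Set Bool)).preimage (f := fun x : SpacingSubshift P => x.1 0)
    ((continuous_apply 0).comp continuous_subtype_val)

theorem oneCyl_nonempty : (oneCyl P).Nonempty :=
  ⟨⟨fun t => decide (t = 0), fun i j hij hi hj => by simp_all⟩, rfl⟩

theorem nSet_oneCyl_subset : NSet (sigmaP P) (oneCyl P) (oneCyl P) ⊆ P := by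
  intro n hn
  obtain ⟨hn, x, hx₀, hxn⟩ := mem_nSet_iff.1 hn
  rw [oneCyl, Set.mem_ofPred_eq, sigmaP_iterate_apply, zero_add] at hxn
  simpa using x.2 0 n hn hx₀ hxn

theorem exists_mem_spacingSubshift_glue {x y : ℕ → Bool} (hx : x ∈ SpacingSubshift P)
    (hy : y ∈ SpacingSubshift P) {N M k : ℕ} (hk : Set.Ico k (k + (N + M)) ⊆ P) :
    ∃ z ∈ SpacingSubshift P, (∀ i < N, z i = x i) ∧ ∀ i < M, z (i + (k + N)) = y i := by
  refine ⟨fun t => if t < N then x t else if k + N ≤ t ∧ t < k + N + M then y (t - (k + N))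
    else false, fun i j hij hi hj => ?_, fun i hi => if_pos hi, fun i hi => ?_⟩
  · dsimp only at hi hj
    split_ifs at hi hj with hiN hiM hjN hjM hjN hjM
    · exact hx i j hij hi hj
    -- the distance between a `1` of the `x`-block and one of the `y`-block lies in `(k, k + N + M)`
    · exact hk ⟨by omega, by omega⟩
    · omega
    · simpa [show j - (k + N) - (i - (k + N)) = j - i by omega] using
        hy (i - (k + N)) (j - (k + N)) (by omega) hi hj
  · dsimp only
    rw [if_neg (by omega), if_pos (by omega), Nat.add_sub_cancel]

theorem weaklyMixing_sigmaP_of_thick (hP : Thick P) : WeaklyMixing (sigmaP P) := by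
  refine weaklyMixing_iff_nSet_inter_nonempty.2
    fun U₁ V₁ U₂ V₂ hU₁ hV₁ hU₂ hV₂ ⟨u₁, hu₁⟩ ⟨v₁, hv₁⟩ ⟨u₂, hu₂⟩ ⟨v₂, hv₂⟩ => ?_
  obtain ⟨N₁, hN₁⟩ := PiNat.exists_cylinder_subset hU₁ hu₁
  obtain ⟨N₂, hN₂⟩ := PiNat.exists_cylinder_subset hU₂ hu₂
  obtain ⟨M₁, hM₁⟩ := PiNat.exists_cylinder_subset hV₁ hv₁
  obtain ⟨M₂, hM₂⟩ := PiNat.exists_cylinder_subset hV₂ hv₂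
  -- both pairs are hit at the common time `k + (N₁ + N₂ + 1)`, positive thanks to the `+ 1`
  obtain ⟨k, hk⟩ := hP (N₁ + N₂ + 1 + (M₁ + M₂))
  have glue_mem_nSet {U V : Set (SpacingSubshift P)} {u v : SpacingSubshift P} {N M : ℕ}
      (hN : ∀ y : SpacingSubshift P, y.1 ∈ PiNat.cylinder u.1 N → y ∈ U)
      (hM : ∀ y : SpacingSubshift P, y.1 ∈ PiNat.cylinder v.1 M → y ∈ V)
      (hNle : N ≤ N₁ + N₂ + 1) (hMle : M ≤ M₁ + M₂) :
      k + (N₁ + N₂ + 1) ∈ NSet (sigmaP P) U V := by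
    obtain ⟨z, hz, hzu, hzv⟩ := exists_mem_spacingSubshift_glue u.2 v.2 hk
    refine mem_nSet_iff.2 ⟨by omega, ⟨z, hz⟩, hN _ fun i hi => hzu i (by omega), hM _ ?_⟩
    intro i hi
    rw [sigmaP_iterate_apply]
    exact hzv i (by omega)
  exact ⟨_, glue_mem_nSet hN₁ hM₁ (by omega) (by omega),
    glue_mem_nSet hN₂ hM₂ (by omega) (by omega)⟩

theorem thick_of_weaklyMixing_sigmaP (h : WeaklyMixing (sigmaP P)) : Thick P := by
  intro L
  obtain ⟨k, hk⟩ :=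
    h.thick_nSet continuous_sigmaP isOpen_oneCyl isOpen_oneCyl oneCyl_nonempty oneCyl_nonempty L
  exact ⟨k, hk.trans nSet_oneCyl_subset⟩

end SpacingShift

/-- For any `P ⊆ ℕ`, the spacing shift `σ_P` is weakly mixing iff `P`
is a thick set. -/
theorem statement16 (P : Set ℕ) : WeaklyMixing (sigmaP P) ↔ Thick P :=
  ⟨thick_of_weaklyMixing_sigmaP, weaklyMixing_sigmaP_of_thick⟩
end
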